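/- The dihedral group of order 8 is generated inside GL_6(R) by the matrices φ1 = diag(-1,1,-1,1,-1,1) and ψ = the matrix swapping e1↔e2, sending e3↦-e3, e4↦-e5, e5↦-e4, e6↦-e6; both are Lie algebra automorphisms of h26- (standard basis (0,0,12,31,32,15+24)), and the subgroup ⟨φ1, ψ⟩ of Aut(h26-) is isomorphic to Dih_4 (order 8). -/
import Mathlib


open Submodule

abbrev V6 : Type := Fin 6 → ℝ

def e (i : Fin 6) : V6 := Pi.single i 1

/-- Bracket of h26- (standard basis (0,0,12,31,32,15+24)): [e1,e2]=e3, [e3,e1]=e4,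
[e3,e2]=e5, [e1,e5]=e6, [e2,e4]=e6. -/
def br (x y : V6) : V6 :=
  ![0, 0, x 0 * y 1 - x 1 * y 0, x 2 * y 0 - x 0 * y 2, x 2 * y 1 - x 1 * y 2,
    x 0 * y 4 - x 4 * y 0 + (x 1 * y 3 - x 3 * y 1)]

/-- φ1 = diag(-1,1,-1,1,-1,1). -/
def A : Matrix (Fin 6) (Fin 6) ℝ := Matrix.diagonal ![-1, 1, -1, 1, -1, 1]

/-- ψ : e1↦e2, e2↦e1, e3↦-e3, e4↦-e5, e5↦-e4, e6↦-e6. -/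
def B : Matrix (Fin 6) (Fin 6) ℝ :=
  !![0, 1, 0, 0, 0, 0;
     1, 0, 0, 0, 0, 0;
     0, 0, -1, 0, 0, 0;
     0, 0, 0, 0, -1, 0;
     0, 0, 0, -1, 0, 0;
     0, 0, 0, 0, 0, -1]

section Dihedral

variable {G : Type*} [Group G]

/-- Candidate hom from `DihedralGroup 4`. -/
def dihedralMap (ρ σ : G) : DihedralGroup 4 → G
  | .r i => ρ ^ i.val
  | .sr i => σ * ρ ^ i.val

lemma pow_mod4 {ρ : G} (h : ρ ^ 4 = 1) {m n : ℕ} (hmn : m ≡ n [MOD 4]) :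
    ρ ^ m = ρ ^ n := by
  rw [pow_eq_pow_mod m h, pow_eq_pow_mod n h, hmn]

lemma rho_sigma_comm {ρ σ : G} (h1 : ρ ^ 4 = 1) (h2 : σ ^ 2 = 1)
    (h3 : σ * ρ * σ = ρ⁻¹) : ∀ k : ℕ, ρ ^ k * σ = σ * ρ ^ (3 * k) := by
  have hinv : ρ⁻¹ = ρ ^ 3 := by
    rw [eq_comm, eq_inv_iff_mul_eq_one, ← pow_succ]; exact h1
  have hρσ : ρ * σ = σ * ρ ^ 3 := by
    have := congrArg (fun x => σ * x) h3
    simpa [← mul_assoc, ← pow_two, h2, hinv] using this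
  intro k
  induction k with
  | zero => simp
  | succ k ih =>
    rw [pow_succ, mul_assoc, hρσ, ← mul_assoc, ih, mul_assoc, ← pow_add]
    ring_nf

lemma dihedralMap_hom {ρ σ : G} (h1 : ρ ^ 4 = 1) (h2 : σ ^ 2 = 1)
    (h3 : σ * ρ * σ = ρ⁻¹) (x y : DihedralGroup 4) :
    dihedralMap ρ σ (x * y) = dihedralMap ρ σ x * dihedralMap ρ σ y := by
  have hadd : ∀ i j : ZMod 4, ρ ^ (i + j).val = ρ ^ i.val * ρ ^ j.val := by
    intro i j
    rw [← pow_add]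
    refine pow_mod4 h1 ?_
    rw [← ZMod.natCast_eq_natCast_iff]
    push_cast [ZMod.natCast_rightInverse _]
    ring
  have hsub : ∀ i j : ZMod 4, ρ ^ (3 * i.val + j.val) = ρ ^ (j - i).val := by
    intro i j
    refine pow_mod4 h1 ?_
    rw [← ZMod.natCast_eq_natCast_iff]
    push_cast [ZMod.natCast_rightInverse _]
    have : (3 : ZMod 4) = -1 := by decide
    rw [this]; ring
  have hcomm := rho_sigma_comm h1 h2 h3
  obtain i | i := x <;> obtain j | j := y <;>
    simp only [DihedralGroup.r_mul_r, DihedralGroup.r_mul_sr, DihedralGroup.sr_mul_r,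
      DihedralGroup.sr_mul_sr, dihedralMap]
  · rw [hadd]
  · rw [← mul_assoc, hcomm i.val, mul_assoc, ← pow_add, hsub]
  · rw [hadd, mul_assoc]
  · rw [mul_assoc, ← mul_assoc (ρ ^ i.val), hcomm i.val, ← mul_assoc, ← mul_assoc,
      ← pow_two, h2, one_mul, ← pow_add, hsub]

end Dihedral

@[simp]
lemma cons_val_five' {α : Type*} {m : ℕ} (x : α) (u : Fin m.succ.succ.succ.succ.succ → α) :
    Matrix.vecCons x u 5 =
      Matrix.vecHead (Matrix.vecTail (Matrix.vecTail (Matrix.vecTail (Matrix.vecTail u)))) :=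
  rfl

/-- `A * B`. -/
def C1 : Matrix (Fin 6) (Fin 6) ℝ :=
  !![0, -1, 0, 0, 0, 0;
     1, 0, 0, 0, 0, 0;
     0, 0, 1, 0, 0, 0;
     0, 0, 0, 0, -1, 0;
     0, 0, 0, 1, 0, 0;
     0, 0, 0, 0, 0, -1]

/-- `(A * B) ^ 2`. -/
def C2 : Matrix (Fin 6) (Fin 6) ℝ :=
  !![-1, 0, 0, 0, 0, 0;
     0, -1, 0, 0, 0, 0;
     0, 0, 1, 0, 0, 0;
     0, 0, 0, -1, 0, 0;
     0, 0, 0, 0, -1, 0;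
     0, 0, 0, 0, 0, 1]

/-- `(A * B) ^ 3`. -/
def C3 : Matrix (Fin 6) (Fin 6) ℝ :=
  !![0, 1, 0, 0, 0, 0;
     -1, 0, 0, 0, 0, 0;
     0, 0, 1, 0, 0, 0;
     0, 0, 0, 0, 1, 0;
     0, 0, 0, -1, 0, 0;
     0, 0, 0, 0, 0, -1]

set_option maxHeartbeats 2000000 in
lemma mAA : A * A = 1 := by
  ext i j
  fin_cases i <;> fin_cases j <;>
    simp (config := { decide := true }) [A, Matrix.mul_apply, Fin.sum_univ_succ,
      Matrix.one_apply, Matrix.diagonal_apply, Matrix.vecHead, Matrix.vecTail]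

set_option maxHeartbeats 2000000 in
lemma mBB : B * B = 1 := by
  ext i j
  fin_cases i <;> fin_cases j <;>
    simp (config := { decide := true }) [B, Matrix.mul_apply, Fin.sum_univ_succ,
      Matrix.one_apply, Matrix.vecHead, Matrix.vecTail]

set_option maxHeartbeats 2000000 in
lemma mAB : A * B = C1 := by
  ext i j
  fin_cases i <;> fin_cases j <;>
    simp (config := { decide := true }) [A, B, C1, Matrix.mul_apply, Fin.sum_univ_succ,
      Matrix.diagonal_apply, Matrix.vecHead, Matrix.vecTail]

set_option maxHeartbeats 2000000 in
lemma mC2 : C1 * C1 = C2 := by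
  ext i j
  fin_cases i <;> fin_cases j <;>
    simp (config := { decide := true }) [C1, C2, Matrix.mul_apply, Fin.sum_univ_succ,
      Matrix.vecHead, Matrix.vecTail]

set_option maxHeartbeats 2000000 in
lemma mC3 : C2 * C1 = C3 := by
  ext i j
  fin_cases i <;> fin_cases j <;>
    simp (config := { decide := true }) [C1, C2, C3, Matrix.mul_apply, Fin.sum_univ_succ,
      Matrix.vecHead, Matrix.vecTail]

set_option maxHeartbeats 2000000 in
lemma mC4 : C2 * C2 = 1 := by
  ext i j
  fin_cases i <;> fin_cases j <;>
    simp (config := { decide := true }) [C2, Matrix.mul_apply, Fin.sum_univ_succ,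
      Matrix.one_apply, Matrix.vecHead, Matrix.vecTail]

set_option maxHeartbeats 2000000 in
lemma mAC1 : A * C1 = B := by
  ext i j
  fin_cases i <;> fin_cases j <;>
    simp (config := { decide := true }) [A, B, C1, Matrix.mul_apply, Fin.sum_univ_succ,
      Matrix.diagonal_apply, Matrix.vecHead, Matrix.vecTail]

set_option maxHeartbeats 1000000 in
theorem h26m_dihedral (hA : IsUnit A) (hB : IsUnit B) :
    (∀ x y : V6, Matrix.toLin' A (br x y) = br (Matrix.toLin' A x) (Matrix.toLin' A y)) ∧
    (∀ x y : V6, Matrix.toLin' B (br x y) = br (Matrix.toLin' B x) (Matrix.toLin' B y)) ∧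
    Nat.card (Subgroup.closure {hA.unit, hB.unit} : Subgroup (Matrix (Fin 6) (Fin 6) ℝ)ˣ) = 8 ∧
    Nonempty ((Subgroup.closure {hA.unit, hB.unit} : Subgroup (Matrix (Fin 6) (Fin 6) ℝ)ˣ)
      ≃* DihedralGroup 4) := by
  have hvA : (hA.unit : Matrix (Fin 6) (Fin 6) ℝ) = A := hA.unit_spec
  have hvB : (hB.unit : Matrix (Fin 6) (Fin 6) ℝ) = B := hB.unit_spec
  set ρ : (Matrix (Fin 6) (Fin 6) ℝ)ˣ := hA.unit * hB.unit with hρ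
  have v1 : (ρ : Matrix (Fin 6) (Fin 6) ℝ) = C1 := by
    rw [hρ, Units.val_mul, hvA, hvB, mAB]
  have v2 : ((ρ ^ 2 : (Matrix (Fin 6) (Fin 6) ℝ)ˣ) : Matrix (Fin 6) (Fin 6) ℝ) = C2 := by
    rw [Units.val_pow_eq_pow_val, v1, sq, mC2]
  have v3 : ((ρ ^ 3 : (Matrix (Fin 6) (Fin 6) ℝ)ˣ) : Matrix (Fin 6) (Fin 6) ℝ) = C3 := by
    rw [Units.val_pow_eq_pow_val, v1, pow_succ, sq, mC2, mC3]
  have h1 : ρ ^ 4 = 1 := by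
    ext
    rw [Units.val_pow_eq_pow_val, v1, Units.val_one, show (4 : ℕ) = 2 * 2 from rfl,
      pow_mul, sq C1, mC2, sq, mC4]
  have h2 : hA.unit ^ 2 = 1 := by
    ext
    rw [Units.val_pow_eq_pow_val, hvA, Units.val_one, sq, mAA]
  have h3 : hA.unit * ρ * hA.unit = ρ⁻¹ := by
    rw [eq_inv_iff_mul_eq_one]
    ext
    simp only [Units.val_mul, hvA, v1, Units.val_one, ← mul_assoc]
    rw [mul_assoc (A * C1) A C1, mAC1, mBB]
  have hone : dihedralMap ρ hA.unit 1 = 1 := by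
    show dihedralMap ρ hA.unit (.r 0) = 1
    simp [dihedralMap]
  set f : DihedralGroup 4 →* (Matrix (Fin 6) (Fin 6) ℝ)ˣ :=
    { toFun := dihedralMap ρ hA.unit
      map_one' := hone
      map_mul' := dihedralMap_hom h1 h2 h3 } with hf
  have entry_ne : ∀ (M : Matrix (Fin 6) (Fin 6) ℝ) (a b : Fin 6),
      M a b ≠ (1 : Matrix (Fin 6) (Fin 6) ℝ) a b → M ≠ 1 := by
    intro M a b hab h
    exact hab (by rw [h])
  have hinj : Function.Injective f := by
    rw [injective_iff_map_eq_one]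
    rintro (i | i) h
    · have hu : ρ ^ (i.val) = 1 := h
      have hm := congrArg (fun u : (Matrix (Fin 6) (Fin 6) ℝ)ˣ =>
        (u : Matrix (Fin 6) (Fin 6) ℝ)) hu
      simp only [Units.val_one] at hm
      fin_cases i
      · rfl
      · have hm1 : (↑(ρ ^ 1) : Matrix (Fin 6) (Fin 6) ℝ) = 1 := hm
        rw [pow_one, v1] at hm1
        exact absurd hm1 (entry_ne _ 0 0 (by norm_num [C1, Matrix.one_apply]))
      · have hm1 : (↑(ρ ^ 2) : Matrix (Fin 6) (Fin 6) ℝ) = 1 := hm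
        rw [v2] at hm1
        exact absurd hm1 (entry_ne _ 0 0 (by norm_num [C2, Matrix.one_apply]))
      · have hm1 : (↑(ρ ^ 3) : Matrix (Fin 6) (Fin 6) ℝ) = 1 := hm
        rw [v3] at hm1
        exact absurd hm1 (entry_ne _ 0 0 (by norm_num [C3, Matrix.one_apply]))
    · have hu : hA.unit * ρ ^ (i.val) = 1 := h
      have hm := congrArg (fun u : (Matrix (Fin 6) (Fin 6) ℝ)ˣ =>
        (u : Matrix (Fin 6) (Fin 6) ℝ)) hu
      simp only [Units.val_one, Units.val_mul, hvA] at hm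
      fin_cases i
      · have hm1 : A * (↑(ρ ^ 0) : Matrix (Fin 6) (Fin 6) ℝ) = 1 := hm
        rw [pow_zero, Units.val_one, mul_one] at hm1
        exact absurd hm1 (entry_ne _ 0 0 (by
          norm_num [A, Matrix.diagonal_apply, Matrix.one_apply]))
      · have hm1 : A * (↑(ρ ^ 1) : Matrix (Fin 6) (Fin 6) ℝ) = 1 := hm
        rw [pow_one, v1, mAC1] at hm1
        exact absurd hm1 (entry_ne _ 0 0 (by
          norm_num [B, Matrix.one_apply]))
      · have hm1 : A * (↑(ρ ^ 2) : Matrix (Fin 6) (Fin 6) ℝ) = 1 := hm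
        rw [v2] at hm1
        exact absurd hm1 (entry_ne _ 1 1 (by
          norm_num [A, C2, Matrix.mul_apply, Fin.sum_univ_succ, Matrix.diagonal_apply,
            Matrix.one_apply, Matrix.vecHead, Matrix.vecTail]))
      · have hm1 : A * (↑(ρ ^ 3) : Matrix (Fin 6) (Fin 6) ℝ) = 1 := hm
        rw [v3] at hm1
        exact absurd hm1 (entry_ne _ 0 1 (by
          norm_num [A, C3, Matrix.mul_apply, Fin.sum_univ_succ, Matrix.diagonal_apply,
            Matrix.one_apply, Matrix.vecHead, Matrix.vecTail]))
  have hrange : f.range = Subgroup.closure {hA.unit, hB.unit} := by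
    have hAmem : hA.unit ∈ Subgroup.closure {hA.unit, hB.unit} :=
      Subgroup.subset_closure (by simp)
    have hBmem : hB.unit ∈ Subgroup.closure {hA.unit, hB.unit} :=
      Subgroup.subset_closure (by simp)
    apply le_antisymm
    · rintro x ⟨y, rfl⟩
      obtain i | i := y
      · exact pow_mem (mul_mem hAmem hBmem) _
      · exact mul_mem hAmem (pow_mem (mul_mem hAmem hBmem) _)
    · rw [Subgroup.closure_le]
      rintro x (rfl | rfl)
      · exact ⟨.sr 0, by simp [hf, dihedralMap]⟩
      · refine ⟨.sr 1, ?_⟩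
        show hA.unit * ρ ^ (1 : ZMod 4).val = hB.unit
        rw [show ((1 : ZMod 4)).val = 1 from rfl, pow_one, hρ, ← mul_assoc, ← sq, h2, one_mul]
  have equiv : (Subgroup.closure {hA.unit, hB.unit} :
      Subgroup (Matrix (Fin 6) (Fin 6) ℝ)ˣ) ≃* DihedralGroup 4 :=
    (MulEquiv.subgroupCongr hrange.symm).trans (MonoidHom.ofInjective hinj).symm
  refine ⟨?_, ?_, ?_, ⟨equiv⟩⟩
  · intro x y
    funext i
    fin_cases i <;>
      (simp [br, A, Matrix.toLin'_apply, Matrix.mulVec, dotProduct,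
          Fin.sum_univ_succ, Matrix.diagonal_apply, Matrix.vecHead, Matrix.vecTail]
       <;> ring)
  · intro x y
    funext i
    fin_cases i <;>
      (simp [br, B, Matrix.toLin'_apply, Matrix.mulVec, dotProduct,
          Fin.sum_univ_succ, Matrix.vecHead, Matrix.vecTail,
          show Fin.succ (2 : Fin 5) = 3 from rfl, show ((2 : Fin 4).succ).succ = (4 : Fin 6) from rfl,
          show ((3 : Fin 6) : Fin 6) = 3 from rfl]
       <;> ring)
  · rw [Nat.card_congr equiv.toEquiv, DihedralGroup.nat_card]
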